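/- All children of the root of a tree-child time consistent hybridization network are tree nodes. -/

import Mathlib

open Classical

/-- A walk (path) in a digraph: a nonempty list of vertices with consecutive arcs. -/
def IsWalk {V : Type} (E : V → V → Prop) (p : List V) : Prop := p ≠ [] ∧ p.Chain' E

/-- A path with origin `u` and end `v`. -/
def WalkFromTo {V : Type} (E : V → V → Prop) (u v : V) (p : List V) : Prop :=
  IsWalk E p ∧ p.head? = some u ∧ p.getLast? = some v

/-- `v` is a descendant of `u` (possibly trivial path from `u` to `v`). -/
def Desc {V : Type} (E : V → V → Prop) (u v : V) : Prop := Relation.ReflTransGen E u v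

/-- A root: a node with no incoming arcs. -/
def IsRootNode {V : Type} (E : V → V → Prop) (r : V) : Prop := ∀ u, ¬ E u r

/-- `u` is a strict ancestor of `v`: `v` is a descendant of `u` and every path
from a root to `v` contains `u`. -/
def StrictAnc {V : Type} (E : V → V → Prop) (u v : V) : Prop :=
  Desc E u v ∧ ∀ (r : V) (p : List V), IsRootNode E r → WalkFromTo E r v p → u ∈ p

/-- In-degree. -/
noncomputable def indeg {V : Type} (E : V → V → Prop) (v : V) : ℕ := {u | E u v}.ncard
/-- Out-degree. -/
noncomputable def outdeg {V : Type} (E : V → V → Prop) (v : V) : ℕ := {w | E v w}.ncard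

/-- Tree node: in-degree at most 1. -/
def IsTreeNode {V : Type} (E : V → V → Prop) (v : V) : Prop := indeg E v ≤ 1
/-- Hybrid node: in-degree at least 2. -/
def IsHybrid {V : Type} (E : V → V → Prop) (v : V) : Prop := 2 ≤ indeg E v
/-- Leaf: no outgoing arcs. -/
def IsLeaf {V : Type} (E : V → V → Prop) (v : V) : Prop := ∀ w, ¬ E v w

/-- Acyclicity: no non-trivial path from a node to itself. -/
def Acyclic {V : Type} (E : V → V → Prop) : Prop := ∀ v, ¬ Relation.TransGen E v v

/-- A hybridization network: a rooted DAG whose single root has out-degree > 1. -/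
structure IsHybNet {V : Type} (E : V → V → Prop) (r : V) : Prop where
  acyclic : Acyclic E
  isRoot : IsRootNode E r
  uniqueRoot : ∀ x, IsRootNode E x → x = r
  rootOut : 2 ≤ outdeg E r

/-- Tree-child condition: every internal node has a tree-node child. -/
def TreeChild {V : Type} (E : V → V → Prop) : Prop :=
  ∀ v, ¬ IsLeaf E v → ∃ w, E v w ∧ IsTreeNode E w

/-- Time consistency: a temporal representation exists. -/
def TimeConsistent {V : Type} (E : V → V → Prop) : Prop :=
  ∃ τ : V → ℕ, ∀ u v, E u v → (IsTreeNode E v → τ u < τ v) ∧ (IsHybrid E v → τ u = τ v)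

/-- The leaves are bijectively labeled by `S` via `leaf`. -/
def LabelsLeaves {V S : Type} (E : V → V → Prop) (leaf : S → V) : Prop :=
  Function.Injective leaf ∧ (∀ s, IsLeaf E (leaf s)) ∧ ∀ v, IsLeaf E v → ∃ s, leaf s = v

/-- Distance: length of a shortest path from `u` to `v`. -/
noncomputable def dist {V : Type} (E : V → V → Prop) (u v : V) : ℕ :=
  sInf {n | ∃ p, WalkFromTo E u v p ∧ p.length = n + 1}

/-- Height: largest length of a path from `v` to a leaf. -/
noncomputable def height {V : Type} (E : V → V → Prop) (v : V) : ℕ :=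
  sSup {n | ∃ p w, WalkFromTo E v w p ∧ IsLeaf E w ∧ p.length = n + 1}

/-- Common ancestors of `u` and `v` that are strict ancestors of at least one of them. -/
def CSAnc {V : Type} (E : V → V → Prop) (u v : V) : Set V :=
  {x | Desc E x u ∧ Desc E x v ∧ (StrictAnc E x u ∨ StrictAnc E x v)}

/-- `x` is a least common semi-strict ancestor of `u` and `v`. -/
def IsLCSA {V : Type} (E : V → V → Prop) (u v x : V) : Prop :=
  x ∈ CSAnc E u v ∧ ∀ y ∈ CSAnc E u v, height E x ≤ height E y

/-- The least common semi-strict ancestor `[u,v]` (the root `r` witnesses nonemptiness). -/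
noncomputable def lcsa {V : Type} (E : V → V → Prop) (r u v : V) : V :=
  @Classical.epsilon V ⟨r⟩ (IsLCSA E u v)

/-- `ℓ_N(u,v)`: the distance from `[u,v]` to `u`. -/
noncomputable def ell {V : Type} (E : V → V → Prop) (r u v : V) : ℕ :=
  dist E (lcsa E r u v) u

/-- `L_N(u,v) = ℓ_N(u,v) + ℓ_N(v,u)`: the LCSA-path length between `u` and `v`. -/
noncomputable def pathLen {V : Type} (E : V → V → Prop) (r u v : V) : ℕ :=
  ell E r u v + ell E r v u

/-- `h_N(u,v)`: −1 if `[u,v]` is a strict ancestor of `u` only, 1 if of `v` only, 0 if of both. -/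
noncomputable def hval {V : Type} (E : V → V → Prop) (r u v : V) : ℤ :=
  if StrictAnc E (lcsa E r u v) u then
    (if StrictAnc E (lcsa E r u v) v then 0 else -1)
  else 1

/-- Siblings: distinct nodes sharing a parent. -/
def Sibling {V : Type} (E : V → V → Prop) (u v : V) : Prop :=
  u ≠ v ∧ ∃ p, E p u ∧ E p v

/-- A tree path: a non-trivial path whose end and intermediate nodes are tree nodes. -/
def TreePath {V : Type} (E : V → V → Prop) (p : List V) (u v : V) : Prop :=
  WalkFromTo E u v p ∧ 2 ≤ p.length ∧ ∀ w ∈ p.tail, IsTreeNode E w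

/-- `v` is a tree descendant of `u`. -/
def TreeDesc {V : Type} (E : V → V → Prop) (u v : V) : Prop := ∃ p, TreePath E p u v

/-- Quasi-binary hybridization network. -/
def QuasiBinary {V : Type} (E : V → V → Prop) : Prop :=
  ∀ v : V, (indeg E v, outdeg E v) ∈ ({(0,2),(1,0),(1,2),(2,0),(2,1),(2,2)} : Set (ℕ × ℕ))

/-- Fully resolved hybridization network node types. -/
def FullyResolvedHyb {V : Type} (E : V → V → Prop) : Prop :=
  ∀ v : V, (indeg E v, outdeg E v) ∈ ({(0,2),(1,0),(1,2),(2,0),(2,2)} : Set (ℕ × ℕ))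

/-- Fully resolved phylogenetic network node types. -/
def FullyResolvedPhylo {V : Type} (E : V → V → Prop) : Prop :=
  ∀ v : V, (indeg E v, outdeg E v) ∈ ({(0,2),(1,0),(1,2),(2,1)} : Set (ℕ × ℕ))

/-- Phylogenetic network condition: every hybrid node has exactly one child, a tree node. -/
def PhyloNet {V : Type} (E : V → V → Prop) : Prop :=
  ∀ v, IsHybrid E v → ∃ w, E v w ∧ IsTreeNode E w ∧ ∀ x, E v x → x = w


lemma not_isTreeNode_iff_isHybrid {V : Type} {E : V → V → Prop} {v : V} :
    ¬ IsTreeNode E v ↔ IsHybrid E v := by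
  unfold IsTreeNode IsHybrid
  omega

lemma Acyclic.wellFounded {V : Type} [Finite V] {E : V → V → Prop} (h : Acyclic E) :
    WellFounded E :=
  have : Std.Irrefl (Relation.TransGen E) := ⟨h⟩
  Subrelation.wf Relation.TransGen.single (Finite.wellFounded_of_trans_of_irrefl _)

lemma IsHybrid.exists_parent_ne {V : Type} {E : V → V → Prop} {v : V} (hv : IsHybrid E v)
    (r : V) : ∃ p, E p v ∧ p ≠ r := by
  by_contra! h
  have hsub : {u | E u v} ⊆ {r} := fun u hu => h u hu
  have := Set.ncard_le_ncard hsub (Set.finite_singleton r)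
  rw [Set.ncard_singleton] at this
  exact absurd hv (by unfold IsHybrid indeg; omega)

def IsTemporalRepresentation {V : Type} (E : V → V → Prop) (τ : V → ℕ) : Prop :=
  ∀ u v, E u v → (IsTreeNode E v → τ u < τ v) ∧ (IsHybrid E v → τ u = τ v)

/- Well-founded induction along the arcs: a tree node is later than its parent, and a hybrid
node is as late as any of its parents, one of which is not the root. -/
lemma IsHybNet.time_root_lt {V : Type} [Finite V] {E : V → V → Prop} {r : V}
    (hnet : IsHybNet E r) {τ : V → ℕ} (hτ : IsTemporalRepresentation E τ) :
    ∀ x, x ≠ r → τ r < τ x := by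
  intro x
  induction x using hnet.acyclic.wellFounded.induction with
  | _ x ih =>
    intro hxr
    by_cases hx : IsTreeNode E x
    · obtain ⟨q, hq⟩ : ∃ q, E q x := by
        by_contra! h
        exact hxr (hnet.uniqueRoot x h)
      have hrq : τ r ≤ τ q := by
        rcases eq_or_ne q r with rfl | hqr
        · exact le_rfl
        · exact (ih q hq hqr).le
      exact hrq.trans_lt ((hτ q x hq).1 hx)
    · obtain ⟨p, hp, hpr⟩ := (not_isTreeNode_iff_isHybrid.1 hx).exists_parent_ne r
      rw [← (hτ p x hp).2 (not_isTreeNode_iff_isHybrid.1 hx)]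
      exact ih p hp hpr

theorem stmt3_general {V : Type} [Fintype V] (E : V → V → Prop) (r : V)
    (hnet : IsHybNet E r) (hti : TimeConsistent E) :
    ∀ v, E r v → IsTreeNode E v := by
  obtain ⟨τ, hτ⟩ := hti
  intro v hv
  by_contra hvt
  have hvr : v ≠ r := by
    rintro rfl
    exact hnet.isRoot v hv
  have hsame : τ r = τ v := (hτ r v hv).2 (not_isTreeNode_iff_isHybrid.1 hvt)
  exact (hnet.time_root_lt hτ v hvr).ne hsame

/-- All children of the root of a TCTC hybridization network are tree nodes. -/
theorem stmt3 {V : Type} [Fintype V] (E : V → V → Prop) (r : V)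
    (hnet : IsHybNet E r) (htc : TreeChild E) (hti : TimeConsistent E) :
    ∀ v, E r v → IsTreeNode E v :=
  stmt3_general E r hnet hti
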